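/- arXiv:2504.02325 — 3 statements merged into one kernel-verified Lean document; each statement's English description precedes it below -/
import Mathlib

section
/- Let n, k, m, s, d, n', k' be integers with n > 0, 1 ≤ k ≤ n, d = gcd(n,k), (n/d)·k' − (k/d)·n' = 1, |s| = |m·n − k²|, and suppose the three integers (m·n − k²)/d, k·k' − n'·m, and d have greatest common divisor 1. Then: (i) if n and s are both odd, k and m have different parities; (ii) if n and s are both even, then k is even and m is odd. -/
/-! Modulo 2 the quantity `m n - k²` is `m n - k`. If `n` is odd this is `m - k`, giving (i). If `n`
is even and `s` (hence `m n - k²`) is even, then `k` is even, and were `m` also even, `2` would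
divide `d`, `k k' - n' m` and `(m n - k²) / d = m (n / d) - k (k / d)`, against the gcd hypothesis. -/

namespace Int

lemma not_even_iff_even_of_odd_mul_sub_sq {n k m : ℤ} (hn : Odd n) (h : Odd (m * n - k ^ 2)) :
    ¬ (Even k ↔ Even m) := by
  rw [← not_even_iff_odd, Int.even_sub, Int.even_mul, Int.even_pow] at h
  rw [← not_even_iff_odd] at hn
  tauto

lemma even_of_even_mul_sub_sq {n k m : ℤ} (hn : Even n) (h : Even (m * n - k ^ 2)) : Even k := by
  rw [Int.even_sub, Int.even_mul, Int.even_pow] at h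
  tauto

lemma dvd_mul_sub_sq_div {n k m d p : ℤ} (hdn : d ∣ n) (hdk : d ∣ k) (hpk : p ∣ k) (hpm : p ∣ m) :
    p ∣ (m * n - k ^ 2) / d := by
  obtain ⟨b, rfl⟩ := hdn
  obtain ⟨a, rfl⟩ := hdk
  apply Int.dvd_div_of_mul_dvd
  have hp : p ∣ m * b - a * (d * a) := dvd_sub (hpm.mul_right b) (hpk.mul_left a)
  calc d * p ∣ d * (m * b - a * (d * a)) := mul_dvd_mul_left d hp
    _ = m * (d * b) - (d * a) ^ 2 := by ring

end Int

theorem stmt_0_general (n k m s d n' k' : ℤ)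
    (hd : d = Int.gcd n k)
    (hs : |s| = |m * n - k ^ 2|)
    (hgcd : Int.gcd ((m * n - k ^ 2) / d) (Int.gcd (k * k' - n' * m) d) = 1) :
    (Odd n → Odd s → ¬ (Even k ↔ Even m)) ∧
    (Even n → Even s → Even k ∧ Odd m) := by
  have hodd : Odd s ↔ Odd (m * n - k ^ 2) := by rw [← odd_abs, hs, odd_abs]
  have heven : Even s ↔ Even (m * n - k ^ 2) := by rw [← even_abs, hs, even_abs]
  refine ⟨fun hn hso => Int.not_even_iff_even_of_odd_mul_sub_sq hn (hodd.mp hso),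
    fun hn hse => ?_⟩
  have hk : Even k := Int.even_of_even_mul_sub_sq hn (heven.mp hse)
  refine ⟨hk, Int.not_even_iff_odd.mp fun hm => ?_⟩
  have hdn : d ∣ n := hd ▸ Int.gcd_dvd_left n k
  have hdk : d ∣ k := hd ▸ Int.gcd_dvd_right n k
  have h2d : (2 : ℤ) ∣ d := hd ▸ Int.dvd_coe_gcd hn.two_dvd hk.two_dvd
  have h2 : (2 : ℤ) ∣ (Int.gcd ((m * n - k ^ 2) / d) (Int.gcd (k * k' - n' * m) d) : ℤ) :=
    Int.dvd_coe_gcd (Int.dvd_mul_sub_sq_div hdn hdk hk.two_dvd hm.two_dvd)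
      (Int.dvd_coe_gcd (dvd_sub (hk.two_dvd.mul_right k') (hm.two_dvd.mul_left n')) h2d)
  rw [hgcd] at h2
  norm_num at h2

/-- Parity constraints on the winding number `k` and surgery coefficient `m`
when `m`-surgery on a knot of winding number `k` in `L(n,1)` yields `L(s,1)`
with `n, s` of the same parity. -/
theorem stmt_0 (n k m s d n' k' : ℤ)
    (hn : 0 < n) (hk1 : 1 ≤ k) (hkn : k ≤ n)
    (hd : d = Int.gcd n k)
    (hbezout : (n / d) * k' - (k / d) * n' = 1)
    (hs : |s| = |m * n - k ^ 2|)
    (hgcd : Int.gcd ((m * n - k ^ 2) / d) (Int.gcd (k * k' - n' * m) d) = 1) :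
    (Odd n → Odd s → ¬ (Even k ↔ Even m)) ∧
    (Even n → Even s → Even k ∧ Odd m) :=
  stmt_0_general n k m s d n' k' hd hs hgcd
end

section
/- Let n and k be integers with k ≥ 2, and set p = n·k − n − k². If p ≥ 1, then the Dedekind sum satisfies s(k − 1, p) = (1/12)·((n − 2)/p + n − 8) as rational numbers, i.e., ∑_{j=1}^{p−1} ((j/p))·(((k−1)·j/p)) = (1/12)·((n − 2)/p + n − 8). -/
/-!
Put `q = k - 1` and `m = n - k - 1`, so that `q * m = p + 1`. Writing `0 ≤ j ≤ p` in mixed radix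
as `j = c * m + d` with `0 ≤ c < q`, `0 ≤ d < m`, we get `q * j ≡ c + q * d (mod p)`, and
`0 < c + q * d < p` whenever `0 < j < p`. So `s(q, p) + 1/2` is the sum over the `q × m` grid of
`(j/p - 1/2) * ((c + q * d)/p - 1/2)`, the corners `j = 0` and `j = p` contributing `1/4` each.
After centering `c` and `d` both factors are linear forms without constant term, the mixed term
sums to zero and the squares give `(q + m)(p + 1)/(12 p)`.
-/

/-- The sawtooth function `((x)) = x - ⌊x⌋ - 1/2` for non-integral `x`,
and `((x)) = 0` for integral `x`. -/
def sawtooth (x : ℚ) : ℚ := if x.den = 1 then 0 else x - ⌊x⌋ - 1 / 2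

/-- The Dedekind sum `s(q,p) = ∑_{j=1}^{p-1} ((j/p)) ((qj/p))`. -/
noncomputable def dedekindSum (q p : ℤ) : ℚ :=
  ∑ j ∈ Finset.Icc (1 : ℤ) (p - 1), sawtooth ((j : ℚ) / p) * sawtooth ((q * j : ℚ) / p)

open Finset

theorem sawtooth_intCast_div {a p : ℤ} (hp : 0 < p) (ha : a % p ≠ 0) :
    sawtooth ((a : ℚ) / p) = ((a % p : ℤ) : ℚ) / p - 1 / 2 := by
  have hden : ((a : ℚ) / p).den ≠ 1 := by
    rwa [ne_eq, Rat.den_div_intCast_eq_one_iff _ _ hp.ne', Int.dvd_iff_emod_eq_zero]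
  rw [sawtooth, if_neg hden, Int.self_sub_floor]
  lift p to ℕ using hp.le
  simpa using congrArg (· - (1 / 2 : ℚ))
    (Int.fract_div_intCast_eq_div_intCast_mod (m := a) (n := p) (k := ℚ))

theorem sum_Ico_mul_ediv_emod {q m : ℤ} (hm : 0 < m) (f : ℤ → ℤ → ℚ) :
    ∑ j ∈ Ico 0 (q * m), f (j / m) (j % m) = ∑ c ∈ Ico 0 q, ∑ d ∈ Ico 0 m, f c d := by
  rw [← sum_product']
  refine sum_nbij' (fun j => (j / m, j % m)) (fun cd => cd.1 * m + cd.2) ?_ ?_ ?_ ?_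
    (fun _ _ => rfl)
  · intro j hj
    simp only [mem_Ico, mem_product] at hj ⊢
    exact ⟨⟨Int.ediv_nonneg hj.1 hm.le, Int.ediv_lt_of_lt_mul hm hj.2⟩,
      Int.emod_nonneg _ hm.ne', Int.emod_lt_of_pos _ hm⟩
  · rintro ⟨c, d⟩ hcd
    simp only [mem_Ico, mem_product] at hcd ⊢
    constructor <;> nlinarith
  · intro j _
    simp [Int.ediv_mul_add_emod]
  · rintro ⟨c, d⟩ hcd
    simp only [mem_Ico, mem_product] at hcd
    ext
    · simp [Int.add_mul_ediv_right, add_comm, Int.ediv_eq_zero_of_lt hcd.2.1 hcd.2.2, hm.ne']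
    · simp [add_comm, Int.emod_eq_of_lt hcd.2.1 hcd.2.2]

theorem sum_Ico_zero_intCast {q : ℤ} (hq : 0 ≤ q) :
    ∑ c ∈ Ico 0 q, (c : ℚ) = q * (q - 1) / 2 := by
  induction q, hq using Int.leInduction with
  | base => simp
  | succ q hq ih =>
    rw [Ico_add_one_right_eq_Icc, ← Ico_insert_right hq, sum_insert right_notMem_Ico, ih]
    push_cast; ring

theorem sum_Ico_zero_intCast_sq {q : ℤ} (hq : 0 ≤ q) :
    ∑ c ∈ Ico 0 q, (c : ℚ) ^ 2 = q * (q - 1) * (2 * q - 1) / 6 := by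
  induction q, hq using Int.leInduction with
  | base => simp
  | succ q hq ih =>
    rw [Ico_add_one_right_eq_Icc, ← Ico_insert_right hq, sum_insert right_notMem_Ico, ih]
    push_cast; ring

theorem sum_Ico_zero_const {q : ℤ} (hq : 0 ≤ q) (a : ℚ) : ∑ _c ∈ Ico 0 q, a = q * a := by
  rw [sum_const, Int.card_Ico, sub_zero, nsmul_eq_mul, ← Int.cast_natCast, Int.toNat_of_nonneg hq]

theorem sum_Ico_zero_sub_half {q : ℤ} (hq : 0 ≤ q) :
    ∑ c ∈ Ico 0 q, ((c : ℚ) - (q - 1) / 2) = 0 := by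
  rw [sum_sub_distrib, sum_Ico_zero_intCast hq, sum_Ico_zero_const hq]
  ring

theorem sum_Ico_zero_sub_half_sq {q : ℤ} (hq : 0 ≤ q) :
    ∑ c ∈ Ico 0 q, ((c : ℚ) - (q - 1) / 2) ^ 2 = (q : ℚ) * ((q : ℚ) ^ 2 - 1) / 12 := by
  simp only [sub_sq, sum_add_distrib, sum_sub_distrib, ← sum_mul, ← mul_sum,
    sum_Ico_zero_intCast hq, sum_Ico_zero_intCast_sq hq, sum_Ico_zero_const hq]
  ring

def mixedRadixTerm (q m p c d : ℤ) : ℚ :=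
  (((c * m + d : ℤ) : ℚ) / p - 1 / 2) * (((c + q * d : ℤ) : ℚ) / p - 1 / 2)

section MixedRadix

variable {q m p : ℤ}

theorem mul_add_emod_eq_of_mul_eq_add_one (hqm : q * m = p + 1) {c d : ℤ}
    (hc : 0 ≤ c ∧ c < q) (hd : 0 ≤ d ∧ d < m) (hlt : c * m + d < p) :
    q * (c * m + d) % p = c + q * d := by
  have hp : 0 ≤ p := by nlinarith
  have hbound : c + q * d < p := by nlinarith [mul_nonneg hp (by linarith : 0 ≤ m - 1 - d)]
  rw [show q * (c * m + d) = c + q * d + p * c by linear_combination c * hqm,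
    Int.add_mul_emod_self_left]
  exact Int.emod_eq_of_lt (by nlinarith) hbound

theorem sum_Ico_sum_Ico_mixedRadixTerm (hqm : q * m = p + 1) (hq : 0 ≤ q) (hm : 0 ≤ m)
    (hp : p ≠ 0) :
    ∑ c ∈ Ico 0 q, ∑ d ∈ Ico 0 m, mixedRadixTerm q m p c d =
      (q + m) * (p + 1) / (12 * p) := by
  have hqmQ : (q : ℚ) * m = p + 1 := by exact_mod_cast hqm
  have hpQ : (p : ℚ) ≠ 0 := by exact_mod_cast hp
  have hcentre : ∀ c d : ℤ, mixedRadixTerm q m p c d =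
      (m * ((c : ℚ) - (q - 1) / 2) ^ 2
        + (p + 2) * (((c : ℚ) - (q - 1) / 2) * ((d : ℚ) - (m - 1) / 2))
        + q * ((d : ℚ) - (m - 1) / 2) ^ 2) / p ^ 2 := by
    intro c d
    set x : ℚ := c - (q - 1) / 2
    set y : ℚ := d - (m - 1) / 2
    have hx : ((c * m + d : ℤ) : ℚ) - p / 2 = m * x + y := by
      push_cast; linear_combination hqmQ / 2
    have hy : ((c + q * d : ℤ) : ℚ) - p / 2 = x + q * y := by
      push_cast; linear_combination hqmQ / 2
    calc mixedRadixTerm q m p c d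
        = ((((c * m + d : ℤ) : ℚ) - p / 2) * (((c + q * d : ℤ) : ℚ) - p / 2)) / p ^ 2 := by
          rw [mixedRadixTerm]; field_simp
      _ = _ := by rw [hx, hy]; linear_combination x * y * hqmQ / p ^ 2
  simp only [hcentre, ← sum_div, sum_add_distrib, ← mul_sum, ← sum_mul,
    sum_Ico_zero_const hq, sum_Ico_zero_const hm, sum_Ico_zero_sub_half_sq hq,
    sum_Ico_zero_sub_half_sq hm, sum_Ico_zero_sub_half hq, sum_Ico_zero_sub_half hm]
  field_simp
  linear_combination ((q : ℚ) + m) * (q * m + p) * hqmQ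

theorem sawtooth_mul_sawtooth_eq_mixedRadixTerm (hp : 0 < p) (hm : 0 < m)
    (hqm : q * m = p + 1) {j : ℤ} (hj : j ∈ Icc 1 (p - 1)) :
    sawtooth ((j : ℚ) / p) * sawtooth ((q * j : ℚ) / p) =
      mixedRadixTerm q m p (j / m) (j % m) := by
  rw [mem_Icc] at hj
  have hdecomp : j / m * m + j % m = j := Int.ediv_mul_add_emod j m
  have hc : 0 ≤ j / m ∧ j / m < q :=
    ⟨Int.ediv_nonneg (by omega) hm.le, Int.ediv_lt_of_lt_mul hm (by nlinarith)⟩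
  have hd : 0 ≤ j % m ∧ j % m < m := ⟨Int.emod_nonneg _ hm.ne', Int.emod_lt_of_pos _ hm⟩
  have hmod := mul_add_emod_eq_of_mul_eq_add_one hqm hc hd (by omega)
  rw [hdecomp] at hmod
  have hpos : 0 < j / m + q * (j % m) := by nlinarith
  have hjmod : j % p = j := Int.emod_eq_of_lt (by omega) (by omega)
  rw [sawtooth_intCast_div hp (by omega), ← Int.cast_mul, sawtooth_intCast_div hp (by omega),
    hjmod, hmod, mixedRadixTerm, hdecomp]

theorem mixedRadixTerm_ediv_emod_self (hp : 0 < p) (hm : 0 < m) (hqm : q * m = p + 1) :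
    mixedRadixTerm q m p (p / m) (p % m) = 1 / 4 := by
  obtain ⟨hpdiv, hpmod⟩ : p / m = q - 1 ∧ p % m = m - 1 :=
    (Int.ediv_emod_unique hm).2 ⟨by linear_combination hqm, by omega, by omega⟩
  rw [hpdiv, hpmod, mixedRadixTerm, show (q - 1) * m + (m - 1) = p by linear_combination hqm,
    show q - 1 + q * (m - 1) = p by linear_combination hqm, div_self (by positivity)]
  norm_num

theorem sum_Ico_mixedRadixTerm_ediv_emod (hp : 0 < p) (hm : 0 < m) (hqm : q * m = p + 1) :
    ∑ j ∈ Ico 0 (q * m), mixedRadixTerm q m p (j / m) (j % m) =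
      ∑ j ∈ Icc 1 (p - 1), mixedRadixTerm q m p (j / m) (j % m) + 1 / 2 := by
  have hsplit : Icc 0 p = insert 0 (insert p (Icc 1 (p - 1))) := by
    ext; simp only [mem_Icc, mem_insert]; omega
  rw [hqm, Ico_add_one_right_eq_Icc, hsplit,
    sum_insert (by simp only [mem_Icc, mem_insert]; omega), sum_insert (by simp),
    mixedRadixTerm_ediv_emod_self hp hm hqm]
  norm_num [mixedRadixTerm]
  ring

theorem dedekindSum_of_mul_eq_add_one (hq : 0 < q) (hp : 0 < p) (hqm : q * m = p + 1) :
    dedekindSum q p = (q + m) * (p + 1) / (12 * p) - 1 / 2 := by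
  have hm : 0 < m := by nlinarith
  calc dedekindSum q p = ∑ j ∈ Icc 1 (p - 1), mixedRadixTerm q m p (j / m) (j % m) :=
        sum_congr rfl fun j hj => sawtooth_mul_sawtooth_eq_mixedRadixTerm hp hm hqm hj
    _ = ∑ c ∈ Ico 0 q, ∑ d ∈ Ico 0 m, mixedRadixTerm q m p c d - 1 / 2 := by
      rw [← sum_Ico_mul_ediv_emod hm, sum_Ico_mixedRadixTerm_ediv_emod hp hm hqm]; ring
    _ = _ := by rw [sum_Ico_sum_Ico_mixedRadixTerm hqm hq.le hm.le hp.ne']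

end MixedRadix

/-- For `k ≥ 2` and `p = nk - n - k² ≥ 1`, the Dedekind sum satisfies
`s(k-1, p) = (1/12)((n-2)/p + n - 8)`. -/
theorem stmt_12 (n k p : ℤ) (hk : 2 ≤ k) (hp : p = n * k - n - k ^ 2)
    (hp1 : 1 ≤ p) :
    dedekindSum (k - 1) p = (1 / 12) * (((n : ℚ) - 2) / p + (n : ℚ) - 8) ∧
    ∑ j ∈ Finset.Icc (1 : ℤ) (p - 1),
        sawtooth ((j : ℚ) / p) * sawtooth (((k - 1 : ℤ) * j : ℚ) / p) =
      (1 / 12) * (((n : ℚ) - 2) / p + (n : ℚ) - 8) := by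
  have hval : dedekindSum (k - 1) p = (1 / 12) * (((n : ℚ) - 2) / p + (n : ℚ) - 8) := by
    rw [dedekindSum_of_mul_eq_add_one (m := n - k - 1) (by omega) (by omega)
      (by rw [hp]; ring)]
    have hpQ : (p : ℚ) ≠ 0 := by exact_mod_cast (by omega : p ≠ 0)
    push_cast
    field_simp
    ring
  exact ⟨hval, hval⟩
end

section
/- Let n be an odd integer with n ≥ 5, let s be an even integer with s ≥ 2, and let i be an integer with i = 0 or i = s/2. If, as rational numbers, (−1/4 + (2i − s)²/(4s)) − (n − 1)/4 equals 1/4 or −1/4, then i = 0 and either s = n + 1 or s = n − 1. -/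
/-!
At `i = 0` the correction term `d(L(s,1), 0) = -1/4 + s²/(4s)` is `(s - 1)/4`, so the
difference with `d(L(n,1), 0) = (n - 1)/4` is `(s - n)/4`, which is `±1/4` exactly when
`s = n ± 1`. At `i = s/2` the square vanishes, the difference is `-n/4`, and `±1/4` would
force `n = ∓1`.
-/

/-- The correction term `d(L(s,1), i)` of the lens space `L(s,1)`. -/
def lensSpaceDInvariant (s i : ℚ) : ℚ :=
  -1 / 4 + (2 * i - s) ^ 2 / (4 * s)

lemma lensSpaceDInvariant_zero {s : ℚ} (hs : s ≠ 0) :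
    lensSpaceDInvariant s 0 = (s - 1) / 4 := by
  unfold lensSpaceDInvariant
  field_simp
  ring

lemma lensSpaceDInvariant_half (s : ℚ) : lensSpaceDInvariant s (s / 2) = -1 / 4 := by
  simp [lensSpaceDInvariant, mul_div_cancel₀]

theorem stmt_18_general (n s i : ℤ) (hn5 : 5 ≤ n)
    (hs : Even s) (hs2 : 2 ≤ s) (hi : i = 0 ∨ i = s / 2)
    (hd : (-1 / 4 + (2 * (i : ℚ) - (s : ℚ)) ^ 2 / (4 * (s : ℚ))) - ((n : ℚ) - 1) / 4 = 1 / 4 ∨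
      (-1 / 4 + (2 * (i : ℚ) - (s : ℚ)) ^ 2 / (4 * (s : ℚ))) - ((n : ℚ) - 1) / 4 = -1 / 4) :
    i = 0 ∧ (s = n + 1 ∨ s = n - 1) := by
  change lensSpaceDInvariant s i - ((n : ℚ) - 1) / 4 = 1 / 4 ∨
    lensSpaceDInvariant s i - ((n : ℚ) - 1) / 4 = -1 / 4 at hd
  rcases hi with rfl | rfl
  · have hs0 : (s : ℚ) ≠ 0 := by exact_mod_cast (by omega : s ≠ 0)
    rw [Int.cast_zero, lensSpaceDInvariant_zero hs0] at hd
    refine ⟨rfl, ?_⟩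
    rcases hd with hd | hd
    · left; exact_mod_cast (by linarith : (s : ℚ) = n + 1)
    · right; exact_mod_cast (by linarith : (s : ℚ) = n - 1)
  · have hn5' : (5 : ℚ) ≤ n := by exact_mod_cast hn5
    rw [Int.cast_div hs.two_dvd two_ne_zero, Int.cast_two, lensSpaceDInvariant_half] at hd
    exfalso
    rcases hd with hd | hd <;> linarith

/-- Arithmetic core of the different-parity case: for odd `n ≥ 5` and even
`s ≥ 2`, if the difference of d-invariants `d(L(s,1), i) - d(L(n,1), 0)` is
`±1/4` at a self-conjugate Spin^c structure `i ∈ {0, s/2}`, then `i = 0` and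
`s = n ± 1`. -/
theorem stmt_18 (n s i : ℤ) (hn : Odd n) (hn5 : 5 ≤ n)
    (hs : Even s) (hs2 : 2 ≤ s) (hi : i = 0 ∨ i = s / 2)
    (hd : (-1 / 4 + (2 * (i : ℚ) - (s : ℚ)) ^ 2 / (4 * (s : ℚ))) - ((n : ℚ) - 1) / 4 = 1 / 4 ∨
      (-1 / 4 + (2 * (i : ℚ) - (s : ℚ)) ^ 2 / (4 * (s : ℚ))) - ((n : ℚ) - 1) / 4 = -1 / 4) :
    i = 0 ∧ (s = n + 1 ∨ s = n - 1) :=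
  stmt_18_general n s i hn5 hs hs2 hi hd
end
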